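/- arXiv:1908.06667 — 4 statements merged into one kernel-verified Lean document; each statement's English description precedes it below -/
import Mathlib

section
/- For all vertices v, w ∈ V, the standard generators σ_v and σ_w are conjugate elements of the Artin group G(Γ). -/
/-!
Generators joined by a braid relation `a b a = b a b` are conjugate, by `a b`. The origin
`0 ∈ {0,1}^4` is adjacent to every other vertex, because all coordinate differences `i_μ − 0`
are nonnegative, so every `σ_v` is conjugate to `σ_0`.
-/

/-- Vertices of the Lönne graph: quadruples in `{0,1}^4`. -/
abbrev Vtx : Type := Fin 4 → Fin 2

/-- Two distinct vertices `i, j` are joined by an edge iff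
`(i_μ − j_μ)·(i_ν − j_ν) ≥ 0` for all `μ, ν` (differences taken in `ℤ`). -/
def LonneEdge (i j : Vtx) : Prop :=
  i ≠ j ∧ ∀ μ ν : Fin 4,
    0 ≤ (((i μ : ℕ) : ℤ) - ((j μ : ℕ) : ℤ)) * (((i ν : ℕ) : ℤ) - ((j ν : ℕ) : ℤ))

/-- The defining relations of the Artin group `G(Γ)`: commutation for non-edges,
braiding for edges. -/
def artinRels : Set (FreeGroup Vtx) :=
  {r | ∃ v w : Vtx,
    (v ≠ w ∧ ¬ LonneEdge v w ∧
      r = FreeGroup.of v * FreeGroup.of w * (FreeGroup.of v)⁻¹ * (FreeGroup.of w)⁻¹) ∨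
    (LonneEdge v w ∧
      r = FreeGroup.of v * FreeGroup.of w * FreeGroup.of v *
        (FreeGroup.of w * FreeGroup.of v * FreeGroup.of w)⁻¹)}

/-- The Artin group `G(Γ)` of the Lönne graph. -/
abbrev ArtinG : Type := PresentedGroup artinRels

/-- The standard generators `σ_v` of `G(Γ)`. -/
def σ (v : Vtx) : ArtinG := PresentedGroup.of v


theorem isConj_of_mul_mul_eq {G : Type*} [Group G] {a b : G} (h : a * b * a = b * a * b) :
    IsConj a b :=
  isConj_iff.mpr ⟨a * b, by rw [mul_inv_eq_iff_eq_mul, h]; group⟩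

theorem σ_braid {v w : Vtx} (h : LonneEdge v w) : σ v * σ w * σ v = σ w * σ v * σ w := by
  simpa only [σ, PresentedGroup.of, map_mul] using
    PresentedGroup.mk_eq_mk_of_mul_inv_mem (rels := artinRels) ⟨v, w, .inr ⟨h, rfl⟩⟩

theorem lonneEdge_zero {v : Vtx} (hv : v ≠ 0) : LonneEdge v 0 :=
  ⟨hv, fun μ ν => by simp only [Pi.zero_apply, Fin.val_zero, Nat.cast_zero, sub_zero]; positivity⟩

theorem isConj_σ_zero (v : Vtx) : IsConj (σ v) (σ 0) := by
  rcases eq_or_ne v 0 with rfl | hv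
  · rfl
  · exact isConj_of_mul_mul_eq (σ_braid (lonneEdge_zero hv))

/-- All standard generators of `G(Γ)` are pairwise conjugate. -/
theorem generators_conjugate : ∀ v w : Vtx, IsConj (σ v) (σ w) :=
  fun v w => (isConj_σ_zero v).trans (isConj_σ_zero w).symm
end

section
/- The sequence of vertices v₁, v₂, v₃, v₄, v₅, v₆, v₇, v₈ is a chordless 8-cycle in the Lönne graph Γ: v_i and v_{i+1} are joined by an edge for 1 ≤ i ≤ 7, v₈ and v₁ are joined by an edge, and no other pair v_i, v_j (i ≠ j) is joined by an edge. -/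
/-- The sequence of vertices `v₁, …, v₈` (zero-indexed: `cycleVtx k` is `v_{k+1}`). -/
def cycleVtx : Fin 8 → Vtx :=
  ![![0,0,0,1], ![0,1,0,1], ![0,1,0,0], ![0,1,1,0], ![0,0,1,0], ![1,0,1,0], ![1,0,0,0],
    ![1,0,0,1]]

theorem forall_mul_sub_nonneg_iff_le_or_le {ι α : Type*} [Ring α] [LinearOrder α]
    [IsStrictOrderedRing α] (f g : ι → α) :
    (∀ μ ν, 0 ≤ (f μ - g μ) * (f ν - g ν)) ↔ f ≤ g ∨ g ≤ f := by
  constructor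
  · intro h
    by_contra! hinc
    simp only [Pi.le_def, not_forall, not_le] at hinc
    obtain ⟨⟨μ, hμ⟩, ⟨ν, hν⟩⟩ := hinc
    exact (h μ ν).not_gt (mul_neg_of_pos_of_neg (sub_pos.2 hμ) (sub_neg.2 hν))
  · rintro (hle | hle) μ ν
    · exact mul_nonneg_of_nonpos_of_nonpos (sub_nonpos.2 (hle μ)) (sub_nonpos.2 (hle ν))
    · exact mul_nonneg (sub_nonneg.2 (hle μ)) (sub_nonneg.2 (hle ν))

theorem lonneEdge_iff_ne_and_le_or_le (i j : Vtx) :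
    LonneEdge i j ↔ i ≠ j ∧ (i ≤ j ∨ j ≤ i) := by
  have cast_le (a b : Vtx) : (fun μ ↦ ((a μ : ℕ) : ℤ)) ≤ (fun μ ↦ ((b μ : ℕ) : ℤ)) ↔ a ≤ b := by
    simp only [Pi.le_def, Nat.cast_le, Fin.val_fin_le]
  rw [LonneEdge, forall_mul_sub_nonneg_iff_le_or_le (fun μ ↦ ((i μ : ℕ) : ℤ)), cast_le, cast_le]

/-- `v₁, …, v₈` is a chordless 8-cycle in the Lönne graph: two distinct vertices of the
cycle are joined by an edge iff they are cyclically adjacent (`j = i + 1` or `i = j + 1`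
in `Fin 8`, i.e. modulo 8). -/
theorem cycle_is_chordless_8cycle :
    ∀ i j : Fin 8, i ≠ j →
      (LonneEdge (cycleVtx i) (cycleVtx j) ↔ (j = i + 1 ∨ i = j + 1)) := by
  simp only [lonneEdge_iff_ne_and_le_or_le, Pi.le_def, cycleVtx]
  decide
end

section
/- The Hefez–Lazzeri intersection matrix M (a 16×16 skew-symmetric integer matrix) has rank 10 over ℚ; equivalently, its kernel has dimension 6. -/
/-- Lexicographic (first coordinate first) strict order on `{0,1}^4`. -/
def lexLt (i j : Vtx) : Prop :=
  ∃ μ : Fin 4, (∀ ν : Fin 4, ν < μ → i ν = j ν) ∧ i μ < j μ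

/-- The Hefez–Lazzeri sign condition: `(i_μ − j_μ)·(i_ν − j_ν) ≥ 0` for all `μ, ν`. -/
def sameSign (i j : Vtx) : Prop :=
  ∀ μ ν : Fin 4,
    0 ≤ (((i μ : ℕ) : ℤ) - ((j μ : ℕ) : ℤ)) * (((i ν : ℕ) : ℤ) - ((j ν : ℕ) : ℤ))

/-- The number of coordinates in which `i` and `j` differ. -/
def hamming (i j : Vtx) : ℕ := (Finset.univ.filter fun ν : Fin 4 => i ν ≠ j ν).card

open scoped Classical in
/-- The entry of the Hefez–Lazzeri matrix for `i < j` lexicographically. -/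
noncomputable def hlUpper (i j : Vtx) : ℚ :=
  if sameSign i j then -(-1 : ℚ) ^ hamming i j else 0

open scoped Classical in
/-- The Hefez–Lazzeri intersection matrix, a skew-symmetric `16 × 16` matrix. -/
noncomputable def hlMatrix : Matrix Vtx Vtx ℚ := fun i j =>
  if lexLt i j then hlUpper i j else if lexLt j i then -(hlUpper j i) else 0

namespace Matrix

variable {m n k R S : Type*} [Fintype n] [Fintype k] [CommRing R] [CommRing S]
  [StrongRankCondition S]

theorem rank_map_le_card_of_eq_mul (f : R →+* S) {A : Matrix m n R} (B : Matrix m k R)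
    (C : Matrix k n R) (h : A = B * C) : (A.map f).rank ≤ Fintype.card k := by
  rw [h, Matrix.map_mul]
  exact (rank_mul_le_left _ _).trans (rank_le_card_width _)

theorem card_le_rank_map_of_mul_eq_one [DecidableEq k] (f : R →+* S) {A : Matrix m n R}
    (r : k → m) (c : k → n) (B : Matrix k k R) (h : A.submatrix r c * B = 1) :
    Fintype.card k ≤ (A.map f).rank := by
  have hunit : IsUnit ((A.map f).submatrix r c) := by
    refine isUnit_iff_exists_inv.mpr ⟨B.map f, ?_⟩
    rw [submatrix_map, ← Matrix.map_mul, h, Matrix.map_one _ f.map_zero f.map_one]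
  exact (rank_of_isUnit _ hunit).symm.le.trans (rank_submatrix_le _ r c)

end Matrix

instance (i j : Vtx) : Decidable (lexLt i j) := by unfold lexLt; infer_instance

instance (i j : Vtx) : Decidable (sameSign i j) := by unfold sameSign; infer_instance

def hlUpperInt (i j : Vtx) : ℤ := if sameSign i j then -(-1) ^ hamming i j else 0

def hlMatrixInt : Matrix Vtx Vtx ℤ := fun i j =>
  if lexLt i j then hlUpperInt i j else if lexLt j i then -hlUpperInt j i else 0

theorem hlMatrix_eq_map_int : hlMatrix = hlMatrixInt.map (Int.castRingHom ℚ) := by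
  ext i j
  simp only [hlMatrix, hlUpper, hlMatrixInt, hlUpperInt, Matrix.map_apply]
  split_ifs <;> simp

/-- Reading a vertex as a binary number with the first coordinate most significant numbers the
vertices in lexicographic order. -/
def lexIndex : Vtx ≃ Fin 16 :=
  (Equiv.arrowCongr Fin.revPerm (Equiv.refl (Fin 2))).trans finFunctionFinEquiv

/-- The pivots are the lexicographically first ten vertices, `0000, …, 1001`. -/
def pivotVtx (k : Fin 10) : Vtx := lexIndex.symm (Fin.castLE (by norm_num) k)

def pivotMinorInv : Matrix (Fin 10) (Fin 10) ℤ :=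
  !![0, -1, -1, -1, -1, -1, -1, -2, 1, 0;
    1, 0, 0, -1, 0, -1, 1, -1, 1, 1;
    1, 0, 0, -1, 0, 0, 0, -1, 1, 1;
    1, 1, 1, 0, 0, 0, 1, 0, 0, 1;
    1, 0, 0, 0, 0, -1, 0, -1, 1, 1;
    1, 1, 0, 0, 1, 0, 1, 0, 0, 1;
    1, -1, 0, -1, 0, -1, 0, -2, 2, 1;
    2, 1, 1, 0, 1, 0, 2, 0, 1, 2;
    -1, -1, -1, 0, -1, 0, -2, -1, 0, -2;
    0, -1, -1, -1, -1, -1, -1, -2, 2, 0]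

def pivotCoeffs : Matrix (Fin 10) Vtx ℤ :=
  (!![1, 0, 0, 0, 0, 0, 0, 0, 0, 0, 0, 0, 0, 0, 0, -1;
    0, 1, 0, 0, 0, 0, 0, 0, 0, 0, 0, 0, 0, 0, 1, -1;
    0, 0, 1, 0, 0, 0, 0, 0, 0, 0, 0, 0, 0, 1, 0, -1;
    0, 0, 0, 1, 0, 0, 0, 0, 0, 0, 0, 0, -1, 1, 1, -1;
    0, 0, 0, 0, 1, 0, 0, 0, 0, 0, 0, 1, 0, 0, 0, -1;
    0, 0, 0, 0, 0, 1, 0, 0, 0, 0, -1, 1, 0, 0, 1, -1;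
    0, 0, 0, 0, 0, 0, 1, 0, 0, 0, 1, 0, 1, 0, -1, -1;
    0, 0, 0, 0, 0, 0, 0, 1, 0, 0, 0, 1, 0, 1, 1, -2;
    0, 0, 0, 0, 0, 0, 0, 0, 1, 0, 0, -1, 0, -1, -1, 1;
    0, 0, 0, 0, 0, 0, 0, 0, 0, 1, 1, -1, 1, -1, -1, 0] : Matrix (Fin 10) (Fin 16) ℤ).submatrix
    id lexIndex

theorem hlMatrixInt_pivot_minor_mul_inv :
    hlMatrixInt.submatrix pivotVtx pivotVtx * pivotMinorInv = 1 := by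
  decide +kernel

theorem hlMatrixInt_eq_pivot_cols_mul :
    hlMatrixInt = hlMatrixInt.submatrix id pivotVtx * pivotCoeffs := by
  decide +kernel

/-- The Hefez–Lazzeri intersection matrix has rank `10` over `ℚ` (equivalently, its
kernel has dimension `6`). -/
theorem hl_matrix_rank : hlMatrix.rank = 10 := by
  rw [hlMatrix_eq_map_int]
  apply le_antisymm
  · simpa only [Fintype.card_fin] using Matrix.rank_map_le_card_of_eq_mul (Int.castRingHom ℚ)
      _ pivotCoeffs hlMatrixInt_eq_pivot_cols_mul
  · simpa only [Fintype.card_fin] using Matrix.card_le_rank_map_of_mul_eq_one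
      (Int.castRingHom ℚ) pivotVtx pivotVtx pivotMinorInv hlMatrixInt_pivot_minor_mul_inv
end

section
/- Let n ≥ 1 and let v ∈ ℚ^{2n} be nonzero. Then the symplectic transvection T_v belongs to the symplectic group Sp(2n,ℚ), and T_v is not conjugate in Sp(2n,ℚ) to its inverse: there is no S ∈ Sp(2n,ℚ) with S · T_v · S⁻¹ = T_v⁻¹. -/
/-!
Conjugating by a symplectic `S` sends `T_v` to `T_{Sv}`, and `T_v⁻¹ = 1 - v (Jv)ᵀ` because
`(Jv) ⬝ v = 0`. So `S T_v S⁻¹ = T_v⁻¹` would give `u (Ju)ᵀ = -v (Jv)ᵀ` with `u = Sv`;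
multiplying on the left by `J` gives `(Ju)(Ju)ᵀ = -(Jv)(Jv)ᵀ`, and over an ordered ring the
diagonal entries (squares on the left, minus squares on the right) force `Jv = 0`, i.e. `v = 0`.
-/

open Matrix

/-- The symplectic transvection associated to `v ∈ ℚ^{2n}`: the matrix of the linear map
`x ↦ x + ω(x,v)·v`, where `ω` is the alternating form with matrix `J`. Its entries are
`δ_{ij} + v_i · (J ·ᵥ v)_j`. -/
def sympTransvection (n : ℕ) (v : (Fin n ⊕ Fin n) → ℚ) :
    Matrix (Fin n ⊕ Fin n) (Fin n ⊕ Fin n) ℚ :=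
  1 + Matrix.of (fun i j => v i * (Matrix.J (Fin n) ℚ *ᵥ v) j)

namespace Matrix

theorem eq_zero_of_vecMulVec_self_eq_neg {ι R : Type*} [CommRing R] [LinearOrder R]
    [IsStrictOrderedRing R] {w z : ι → R} (h : vecMulVec w w = -vecMulVec z z) : z = 0 := by
  funext i
  have hi := congrFun (congrFun h i) i
  simp only [vecMulVec_apply, neg_apply] at hi
  exact (mul_self_add_mul_self_eq_zero.mp (by rw [hi]; ring)).2

variable {l R : Type*} [Fintype l] [DecidableEq l] [CommRing R]

def symplecticTransvection (v : l ⊕ l → R) : Matrix (l ⊕ l) (l ⊕ l) R :=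
  1 + vecMulVec v (J l R *ᵥ v)

theorem J_mulVec_dotProduct_self (v : l ⊕ l → R) : J l R *ᵥ v ⬝ᵥ v = 0 := by
  simp [J, dotProduct, Fintype.sum_sum_type, mulVec, fromBlocks, one_apply, mul_comm]

theorem J_mulVec_J_mulVec (v : l ⊕ l → R) : J l R *ᵥ (J l R *ᵥ v) = -v := by
  rw [mulVec_mulVec, J_squared, neg_mulVec, one_mulVec]

theorem vecMul_J (v : l ⊕ l → R) : v ᵥ* J l R = -(J l R *ᵥ v) := by
  rw [← mulVec_transpose, J_transpose, neg_mulVec]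

theorem inv_symplecticTransvection (v : l ⊕ l → R) :
    (symplecticTransvection v)⁻¹ = 1 - vecMulVec v (J l R *ᵥ v) := by
  refine inv_eq_right_inv ?_
  have hsq : vecMulVec v (J l R *ᵥ v) * vecMulVec v (J l R *ᵥ v) = 0 := by
    rw [vecMulVec_mul_vecMulVec, J_mulVec_dotProduct_self, zero_smul, vecMulVec_zero]
  rw [symplecticTransvection, add_mul, one_mul, mul_sub, mul_one, hsq, sub_zero, sub_add_cancel]

theorem symplecticTransvection_mem_symplecticGroup (v : l ⊕ l → R) :
    symplecticTransvection v ∈ symplecticGroup l R := by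
  have hAJ : vecMulVec v (J l R *ᵥ v) * J l R = vecMulVec v v := by
    rw [vecMulVec_mul, vecMul_J, J_mulVec_J_mulVec, neg_neg]
  have hJA : J l R * vecMulVec (J l R *ᵥ v) v = -vecMulVec v v := by
    rw [mul_vecMulVec, J_mulVec_J_mulVec, neg_vecMulVec]
  rw [SymplecticGroup.mem_iff, symplecticTransvection, transpose_add, transpose_one,
    transpose_vecMulVec, add_mul, one_mul, hAJ, mul_add, mul_one, add_mul, hJA,
    vecMulVec_mul_vecMulVec, dotProduct_comm, J_mulVec_dotProduct_self, zero_smul, vecMulVec_zero]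
  abel

theorem mul_symplecticTransvection {S : Matrix (l ⊕ l) (l ⊕ l) R}
    (hS : S ∈ symplecticGroup l R) (v : l ⊕ l → R) :
    S * symplecticTransvection v = symplecticTransvection (S *ᵥ v) * S := by
  have hJS : (J l R *ᵥ (S *ᵥ v)) ᵥ* S = J l R *ᵥ v := by
    rw [← mulVec_transpose, mulVec_mulVec, mulVec_mulVec, SymplecticGroup.mem_iff'.mp hS]
  rw [symplecticTransvection, symplecticTransvection, mul_add, add_mul, mul_one, one_mul,
    mul_vecMulVec, vecMulVec_mul, hJS]

theorem symplecticTransvection_conj {S : Matrix (l ⊕ l) (l ⊕ l) R}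
    (hS : S ∈ symplecticGroup l R) (v : l ⊕ l → R) :
    S * symplecticTransvection v * S⁻¹ = symplecticTransvection (S *ᵥ v) := by
  rw [mul_symplecticTransvection hS,
    mul_nonsing_inv_cancel_right _ _ (SymplecticGroup.symplectic_det hS)]

section Ordered

variable [LinearOrder R] [IsStrictOrderedRing R]

theorem eq_zero_of_symplecticTransvection_eq_inv {u v : l ⊕ l → R}
    (h : symplecticTransvection u = (symplecticTransvection v)⁻¹) : v = 0 := by
  rw [inv_symplecticTransvection, symplecticTransvection, sub_eq_add_neg, add_right_inj] at h
  have hJ := congrArg (J l R * ·) h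
  simp only [Matrix.mul_neg, mul_vecMulVec] at hJ
  rw [← neg_neg v, ← J_mulVec_J_mulVec v, eq_zero_of_vecMulVec_self_eq_neg hJ, mulVec_zero,
    neg_zero]

end Ordered

end Matrix

theorem sympTransvection_eq_symplecticTransvection (n : ℕ) (v : Fin n ⊕ Fin n → ℚ) :
    sympTransvection n v = symplecticTransvection v :=
  rfl

theorem transvection_not_conjugate_inverse_general (n : ℕ)
    (v : (Fin n ⊕ Fin n) → ℚ) (hv : v ≠ 0) :
    sympTransvection n v ∈ Matrix.symplecticGroup (Fin n) ℚ ∧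
    ¬ ∃ S ∈ Matrix.symplecticGroup (Fin n) ℚ,
        S * sympTransvection n v * S⁻¹ = (sympTransvection n v)⁻¹ := by
  rw [sympTransvection_eq_symplecticTransvection]
  refine ⟨symplecticTransvection_mem_symplecticGroup v, ?_⟩
  rintro ⟨S, hS, hconj⟩
  rw [symplecticTransvection_conj hS] at hconj
  exact hv (eq_zero_of_symplecticTransvection_eq_inv hconj)

/-- A symplectic transvection in a nonzero direction lies in `Sp(2n, ℚ)` and is not
conjugate in `Sp(2n, ℚ)` to its inverse. -/
theorem transvection_not_conjugate_inverse (n : ℕ) (hn : 1 ≤ n)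
    (v : (Fin n ⊕ Fin n) → ℚ) (hv : v ≠ 0) :
    sympTransvection n v ∈ Matrix.symplecticGroup (Fin n) ℚ ∧
    ¬ ∃ S ∈ Matrix.symplecticGroup (Fin n) ℚ,
        S * sympTransvection n v * S⁻¹ = (sympTransvection n v)⁻¹ :=
  transvection_not_conjugate_inverse_general n v hv
end
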